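/- For all l1, l2 ∈ ℝ and s > 0 with l1 ≠ l2, the total variation distance between two Cauchy densities with equal scale satisfies (1/2) * ∫_ℝ |p_{l1,s}(x) - p_{l2,s}(x)| dx = (2/π) * arctan(|l2 - l1|/(2*s)). -/

import Mathlib

/-!
`x ↦ arctan ((x - l) / s) / π` is an antiderivative of the Cauchy density, so its integrals over
half-lines are explicit. For `l₁ ≤ l₂` the density centred at `l₁` dominates the one centred at
`l₂` exactly left of the midpoint `m = (l₁ + l₂) / 2`; splitting the integral of
`|p_{l₁,s} - p_{l₂,s}|` at `m` leaves `2 (arctan d - arctan (-d)) / π` with `d = (l₂ - l₁) / (2 s)`.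
-/

open MeasureTheory Real

noncomputable def cauchyPdf (l s x : ℝ) : ℝ := s / (Real.pi * (s ^ 2 + (x - l) ^ 2))

open Filter Set Topology

section CauchyPdf

variable {l s : ℝ}

lemma cauchyPdf_eq_mul_inv_one_add_sq (hs : s ≠ 0) (x : ℝ) :
    cauchyPdf l s x = (π * s)⁻¹ * (1 + ((x - l) / s) ^ 2)⁻¹ := by
  have : 1 + ((x - l) / s) ^ 2 ≠ 0 := by positivity
  unfold cauchyPdf
  field_simp

lemma integrable_cauchyPdf (hs : s ≠ 0) : Integrable (cauchyPdf l s) := by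
  simp_rw [funext (cauchyPdf_eq_mul_inv_one_add_sq (l := l) hs)]
  exact ((integrable_inv_one_add_sq.comp_div hs).comp_sub_right l).const_mul _

lemma hasDerivAt_arctan_div_pi_cauchyPdf (hs : s ≠ 0) (x : ℝ) :
    HasDerivAt (fun x => arctan ((x - l) / s) / π) (cauchyPdf l s x) x := by
  have hlin : HasDerivAt (fun x : ℝ => (x - l) / s) (1 / s) x := by
    simpa using ((hasDerivAt_id x).sub_const l).div_const s
  refine (((hasDerivAt_arctan _).comp x hlin).div_const π).congr_deriv ?_
  rw [cauchyPdf_eq_mul_inv_one_add_sq hs]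
  field_simp

lemma integral_Iic_cauchyPdf (hs : 0 < s) (m : ℝ) :
    ∫ x in Iic m, cauchyPdf l s x = arctan ((m - l) / s) / π + 1 / 2 := by
  have hlim : Tendsto (fun x => arctan ((x - l) / s) / π) atBot (𝓝 (-(π / 2) / π)) :=
    ((tendsto_nhds_of_tendsto_nhdsWithin tendsto_arctan_atBot).comp
      ((tendsto_atBot_add_const_right _ (-l) tendsto_id).atBot_div_const hs)).div_const π
  rw [integral_Iic_of_hasDerivAt_of_tendsto'
    (fun x _ => hasDerivAt_arctan_div_pi_cauchyPdf hs.ne' x)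
    (integrable_cauchyPdf hs.ne').integrableOn hlim]
  field_simp
  ring

lemma integral_Ioi_cauchyPdf (hs : 0 < s) (m : ℝ) :
    ∫ x in Ioi m, cauchyPdf l s x = 1 / 2 - arctan ((m - l) / s) / π := by
  have hlim : Tendsto (fun x => arctan ((x - l) / s) / π) atTop (𝓝 (π / 2 / π)) :=
    ((tendsto_nhds_of_tendsto_nhdsWithin tendsto_arctan_atTop).comp
      ((tendsto_atTop_add_const_right _ (-l) tendsto_id).atTop_div_const hs)).div_const π
  rw [integral_Ioi_of_hasDerivAt_of_tendsto'
    (fun x _ => hasDerivAt_arctan_div_pi_cauchyPdf hs.ne' x)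
    (integrable_cauchyPdf hs.ne').integrableOn hlim]
  field_simp

lemma cauchyPdf_le_cauchyPdf (hs : 0 < s) {l₁ l₂ x : ℝ} (h : (x - l₁) ^ 2 ≤ (x - l₂) ^ 2) :
    cauchyPdf l₂ s x ≤ cauchyPdf l₁ s x := by
  unfold cauchyPdf
  gcongr

end CauchyPdf

lemma integral_abs_sub_eq_of_le_of_ge {f g : ℝ → ℝ} {m : ℝ} (hf : Integrable f)
    (hg : Integrable g) (hleft : ∀ x ≤ m, g x ≤ f x) (hright : ∀ x > m, f x ≤ g x) :
    ∫ x, |f x - g x| = (∫ x in Iic m, f x) - (∫ x in Iic m, g x)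
      + ((∫ x in Ioi m, g x) - ∫ x in Ioi m, f x) := by
  have hint : Integrable fun x => |f x - g x| := (hf.sub hg).abs
  rw [← intervalIntegral.integral_Iic_add_Ioi (b := m) hint.integrableOn hint.integrableOn,
    setIntegral_congr_fun measurableSet_Iic
      (fun x hx => abs_of_nonneg (sub_nonneg.2 (hleft x hx))),
    setIntegral_congr_fun measurableSet_Ioi
      (fun x hx => (abs_sub_comm _ _).trans (abs_of_nonneg (sub_nonneg.2 (hright x hx)))),
    integral_sub hf.integrableOn hg.integrableOn, integral_sub hg.integrableOn hf.integrableOn]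

lemma integral_abs_sub_cauchyPdf_of_le {l₁ l₂ s : ℝ} (hs : 0 < s) (hl : l₁ ≤ l₂) :
    ∫ x, |cauchyPdf l₁ s x - cauchyPdf l₂ s x| = 4 / π * arctan ((l₂ - l₁) / (2 * s)) := by
  have hsq : ∀ x, (x - l₂) ^ 2 - (x - l₁) ^ 2 = 2 * (l₂ - l₁) * ((l₁ + l₂) / 2 - x) := by
    intro x; ring
  rw [integral_abs_sub_eq_of_le_of_ge (m := (l₁ + l₂) / 2) (integrable_cauchyPdf hs.ne')
      (integrable_cauchyPdf hs.ne')
      (fun x hx => cauchyPdf_le_cauchyPdf hs (by nlinarith [hsq x]))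
      (fun x hx => cauchyPdf_le_cauchyPdf hs (by nlinarith [hsq x])),
    integral_Iic_cauchyPdf hs, integral_Iic_cauchyPdf hs,
    integral_Ioi_cauchyPdf hs, integral_Ioi_cauchyPdf hs,
    show ((l₁ + l₂) / 2 - l₁) / s = (l₂ - l₁) / (2 * s) by field_simp; ring,
    show ((l₁ + l₂) / 2 - l₂) / s = -((l₂ - l₁) / (2 * s)) by field_simp; ring, arctan_neg]
  ring

theorem tv_cauchy_same_scale_general (l₁ l₂ s : ℝ) (hs : 0 < s) :
    (1 / 2) * ∫ x : ℝ, |cauchyPdf l₁ s x - cauchyPdf l₂ s x|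
      = (2 / Real.pi) * Real.arctan (|l₂ - l₁| / (2 * s)) := by
  wlog hl : l₁ ≤ l₂ generalizing l₁ l₂
  · simp_rw [abs_sub_comm (cauchyPdf l₁ s _), abs_sub_comm l₂]
    exact this l₂ l₁ (le_of_not_ge hl)
  rw [integral_abs_sub_cauchyPdf_of_le hs hl, abs_of_nonneg (sub_nonneg.2 hl)]
  ring

theorem tv_cauchy_same_scale (l₁ l₂ s : ℝ) (hs : 0 < s) (hl : l₁ ≠ l₂) :
    (1 / 2) * ∫ x : ℝ, |cauchyPdf l₁ s x - cauchyPdf l₂ s x|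
      = (2 / Real.pi) * Real.arctan (|l₂ - l₁| / (2 * s)) :=
  tv_cauchy_same_scale_general l₁ l₂ s hs
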